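/- arXiv:2402.01146 — 4 statements merged into one kernel-verified Lean document; each statement's English description precedes it below -/
import Mathlib

section
/- Let H be a real inner product space and let ℓ̄, ℓ̂ : H → ℝ be convex differentiable functions whose gradients are bounded in norm by G everywhere. Fix step sizes η > 0 and γ > 0, a point w₀ ∈ H, and define w' = w₀ − η·∇ℓ̄(w₀) and w₁ = w' − γ·∇ℓ̂(w'). Then for every u ∈ H: ℓ̄(w₀) − ℓ̄(u) ≤ (‖w₀ − u‖² − ‖w₁ − u‖²)/(2η) + G²(η + γ)²/(2η) − (γ/η)·⟨∇ℓ̂(w'), w₀ − u⟩. -/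
/-!
Convexity bounds `ℓ̄ w₀ - ℓ̄ u` by `⟪∇ℓ̄ w₀, w₀ - u⟫`. Since `w₁ = w₀ - d` with
`d = η ∇ℓ̄ w₀ + γ ∇ℓ̂ w'`, expanding `‖w₁ - u‖²` expresses `2⟪d, w₀ - u⟫` through the decrease of the
squared distance to `u` and `‖d‖² ≤ G² (η + γ)²`; the `γ`-part of `⟪d, w₀ - u⟫` is the last term.
-/

open scoped RealInnerProductSpace

section FirstOrderConvexity

variable {E : Type*} [NormedAddCommGroup E] [NormedSpace ℝ E]

theorem ConvexOn.add_fderiv_sub_le {s : Set E} {f : E → ℝ} {f' : E →L[ℝ] ℝ} {x y : E}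
    (hf : ConvexOn ℝ s f) (hx : x ∈ s) (hy : y ∈ s) (hf' : HasFDerivAt f f' x) :
    f x + f' (y - x) ≤ f y := by
  set L : ℝ →ᵃ[ℝ] E := AffineMap.lineMap x y
  have hline : ConvexOn ℝ (L ⁻¹' s) (f ∘ L) := hf.comp_affineMap L
  have hderiv : HasDerivAt (f ∘ L) (f' (y - x)) 0 :=
    (by simpa [L] using hf' : HasFDerivAt f f' (L 0)).comp_hasDerivAt 0
      AffineMap.hasDerivAt_lineMap
  have hslope := hline.le_slope_of_hasDerivAt (by simpa [L] using hx) (by simpa [L] using hy)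
    one_pos hderiv
  simp only [slope, Function.comp_apply, sub_zero, inv_one, one_smul, vsub_eq_sub] at hslope
  simp only [L, AffineMap.lineMap_apply_one, AffineMap.lineMap_apply_zero] at hslope
  linarith

end FirstOrderConvexity

theorem ConvexOn.sub_le_inner_gradient {H : Type*} [NormedAddCommGroup H] [InnerProductSpace ℝ H]
    [CompleteSpace H] {f : H → ℝ} (hf : ConvexOn ℝ Set.univ f) {x : H}
    (hd : DifferentiableAt ℝ f x) (y : H) :
    f x - f y ≤ ⟪gradient f x, x - y⟫ := by
  have hfd := hasGradientAt_iff_hasFDerivAt.mp hd.hasGradientAt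
  have := hf.add_fderiv_sub_le (Set.mem_univ x) (Set.mem_univ y) hfd
  rw [InnerProductSpace.toDual_apply_apply, ← neg_sub x y, inner_neg_right] at this
  linarith

section Descent

variable {H : Type*} [NormedAddCommGroup H] [InnerProductSpace ℝ H]

theorem two_mul_inner_step_eq (w u d : H) :
    2 * ⟪d, w - u⟫ = ‖w - u‖ ^ 2 - ‖w - d - u‖ ^ 2 + ‖d‖ ^ 2 := by
  rw [sub_right_comm, norm_sub_sq_real (w - u) d, real_inner_comm]
  ring

theorem norm_smul_add_smul_le {g h : H} {G η γ : ℝ} (hη : 0 ≤ η) (hγ : 0 ≤ γ)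
    (hg : ‖g‖ ≤ G) (hh : ‖h‖ ≤ G) :
    ‖η • g + γ • h‖ ≤ G * (η + γ) :=
  calc ‖η • g + γ • h‖ ≤ η * ‖g‖ + γ * ‖h‖ := by
        simpa only [norm_smul_of_nonneg hη, norm_smul_of_nonneg hγ] using
          norm_add_le (η • g) (γ • h)
    _ ≤ η * G + γ * G := by gcongr
    _ = G * (η + γ) := by ring

end Descent

theorem aogd_per_iteration_inequality_general
    {H : Type*} [NormedAddCommGroup H] [InnerProductSpace ℝ H] [CompleteSpace H]
    (ℓbar ℓhat : H → ℝ) (G : ℝ)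
    (hbar_cvx : ConvexOn ℝ Set.univ ℓbar)
    (hbar_diff : Differentiable ℝ ℓbar)
    (hbar_grad : ∀ w : H, ‖gradient ℓbar w‖ ≤ G)
    (hhat_grad : ∀ w : H, ‖gradient ℓhat w‖ ≤ G)
    (η γ : ℝ) (hη : 0 < η) (hγ : 0 < γ)
    (w₀ w' w₁ : H)
    (hw' : w' = w₀ - η • gradient ℓbar w₀)
    (hw₁ : w₁ = w' - γ • gradient ℓhat w')
    (u : H) :
    ℓbar w₀ - ℓbar u ≤
      (‖w₀ - u‖ ^ 2 - ‖w₁ - u‖ ^ 2) / (2 * η) + G ^ 2 * (η + γ) ^ 2 / (2 * η)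
        - (γ / η) * ⟪gradient ℓhat w', w₀ - u⟫ := by
  set g := gradient ℓbar w₀
  set h := gradient ℓhat w'
  set d := η • g + γ • h
  have hconvex : ℓbar w₀ - ℓbar u ≤ ⟪g, w₀ - u⟫ := hbar_cvx.sub_le_inner_gradient (hbar_diff w₀) u
  have hw₁d : w₁ = w₀ - d := by rw [hw₁, hw', sub_sub]
  have hstep := two_mul_inner_step_eq w₀ u d
  have hinner : ⟪d, w₀ - u⟫ = η * ⟪g, w₀ - u⟫ + γ * ⟪h, w₀ - u⟫ := by
    rw [inner_add_left, real_inner_smul_left, real_inner_smul_left]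
  have hd : ‖d‖ ^ 2 ≤ G ^ 2 * (η + γ) ^ 2 := by
    rw [← mul_pow]
    exact pow_le_pow_left₀ (norm_nonneg d)
      (norm_smul_add_smul_le hη.le hγ.le (hbar_grad w₀) (hhat_grad w')) 2
  have hdist : (‖w₀ - u‖ ^ 2 - ‖w₁ - u‖ ^ 2) / (2 * η)
      = ⟪g, w₀ - u⟫ + (γ / η) * ⟪h, w₀ - u⟫ - ‖d‖ ^ 2 / (2 * η) := by
    rw [hw₁d]
    field_simp
    linarith
  have hdη : ‖d‖ ^ 2 / (2 * η) ≤ G ^ 2 * (η + γ) ^ 2 / (2 * η) := by gcongr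
  linarith

/-- **Per-iteration inequality for the two-step AOGD update.**
For convex differentiable losses `ℓ̄, ℓ̂` with gradients bounded by `G`,
the two-step update `w' = w₀ − η∇ℓ̄(w₀)`, `w₁ = w' − γ∇ℓ̂(w')` satisfies, for every `u`,
`ℓ̄(w₀) − ℓ̄(u) ≤ (‖w₀ − u‖² − ‖w₁ − u‖²)/(2η) + G²(η+γ)²/(2η) − (γ/η)⟨∇ℓ̂(w'), w₀ − u⟩`. -/
theorem aogd_per_iteration_inequality
    {H : Type*} [NormedAddCommGroup H] [InnerProductSpace ℝ H] [CompleteSpace H]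
    (ℓbar ℓhat : H → ℝ) (G : ℝ)
    (hbar_cvx : ConvexOn ℝ Set.univ ℓbar) (hhat_cvx : ConvexOn ℝ Set.univ ℓhat)
    (hbar_diff : Differentiable ℝ ℓbar) (hhat_diff : Differentiable ℝ ℓhat)
    (hbar_grad : ∀ w : H, ‖gradient ℓbar w‖ ≤ G)
    (hhat_grad : ∀ w : H, ‖gradient ℓhat w‖ ≤ G)
    (η γ : ℝ) (hη : 0 < η) (hγ : 0 < γ)
    (w₀ w' w₁ : H)
    (hw' : w' = w₀ - η • gradient ℓbar w₀)
    (hw₁ : w₁ = w' - γ • gradient ℓhat w')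
    (u : H) :
    ℓbar w₀ - ℓbar u ≤
      (‖w₀ - u‖ ^ 2 - ‖w₁ - u‖ ^ 2) / (2 * η) + G ^ 2 * (η + γ) ^ 2 / (2 * η)
        - (γ / η) * ⟪gradient ℓhat w', w₀ - u⟫ :=
  aogd_per_iteration_inequality_general ℓbar ℓhat G hbar_cvx hbar_diff hbar_grad hhat_grad η γ hη hγ
    w₀ w' w₁ hw' hw₁ u
end

section
/- Let (Ω, P) be a probability space, d, D ≥ 1, and let u_1, …, u_D : Ω → ℝ^d be independent identically distributed random vectors. For v ∈ ℝ^d define Ĝ(v) = (1/D)·Σ_{i=1}^D cos(⟨u_i, v⟩) and G(v) = E[cos(⟨u_1, v⟩)]. Fix x_1, x_2, x_1', x_2' ∈ ℝ^d and define the pairwise kernel values k = G(x_1 − x_1') + G(x_2 − x_2') − G(x_1 − x_2') − G(x_2 − x_1') and k̂ = Ĝ(x_1 − x_1') + Ĝ(x_2 − x_2') − Ĝ(x_1 − x_2') − Ĝ(x_2 − x_1'). Then for every ε > 0: P(|k̂ − k| ≥ ε) ≤ 8·exp(−D·ε²/32). -/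
/-!
Each of the four base-kernel estimates `Ĝ(v)` is the sample mean of the `D` independent,
identically distributed variables `cos⟪uᵢ, v⟫ ∈ [-1, 1]` with mean `G(v)`, so Hoeffding's
inequality (via sub-Gaussianity of bounded centred variables) gives
`P(|Ĝ(v) - G(v)| ≥ ε/4) ≤ 2 exp(-Dε²/32)`. If `|k̂ - k| ≥ ε`, the triangle inequality forces one
of the four deviations to be at least `ε/4`, and a union bound yields the factor `8`.
-/

open scoped NNReal RealInnerProductSpace
open MeasureTheory ProbabilityTheory Real

section

variable {Ω : Type*} [MeasurableSpace Ω] {P : Measure Ω}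

theorem ProbabilityTheory.HasSubgaussianMGF.measure_abs_ge_le [IsFiniteMeasure P] {X : Ω → ℝ}
    {c : ℝ≥0} (hX : HasSubgaussianMGF X c P) {ε : ℝ} (hε : 0 ≤ ε) :
    P {ω | ε ≤ |X ω|} ≤ ENNReal.ofReal (2 * exp (-ε ^ 2 / (2 * c))) := by
  have h_upper := hX.measure_ge_le hε
  have h_lower := hX.neg.measure_ge_le hε
  have h_split : {ω | ε ≤ |X ω|} ⊆ {ω | ε ≤ X ω} ∪ {ω | ε ≤ (-X) ω} :=
    fun ω (hω : ε ≤ |X ω|) => le_abs.1 hω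
  calc P {ω | ε ≤ |X ω|} ≤ P {ω | ε ≤ X ω} + P {ω | ε ≤ (-X) ω} :=
        (measure_mono h_split).trans (measure_union_le _ _)
    _ = ENNReal.ofReal (P.real {ω | ε ≤ X ω} + P.real {ω | ε ≤ (-X) ω}) := by
        rw [ENNReal.ofReal_add measureReal_nonneg measureReal_nonneg, ofReal_measureReal,
          ofReal_measureReal]
    _ ≤ ENNReal.ofReal (2 * exp (-ε ^ 2 / (2 * c))) :=
        ENNReal.ofReal_le_ofReal (by linarith)

theorem measure_abs_sum_sub_integral_ge_le [IsProbabilityMeasure P] {ι : Type*} [Fintype ι]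
    {Y : ι → Ω → ℝ} (hindep : iIndepFun Y P) (hmeas : ∀ i, AEMeasurable (Y i) P) {a b : ℝ}
    (hbdd : ∀ i, ∀ᵐ ω ∂P, Y i ω ∈ Set.Icc a b) {t : ℝ} (ht : 0 ≤ t) :
    P {ω | t ≤ |∑ i, (Y i ω - P[Y i])|} ≤
      ENNReal.ofReal (2 * exp (-2 * t ^ 2 / (Fintype.card ι * (b - a) ^ 2))) := by
  have h_centered : iIndepFun (fun i ω => Y i ω - P[Y i]) P := by
    exact hindep.comp (fun i x => x - P[Y i]) fun i => measurable_id.sub_const _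
  have h_sum := HasSubgaussianMGF.sum_of_iIndepFun h_centered (s := Finset.univ)
    fun i _ => hasSubgaussianMGF_of_mem_Icc (hmeas i) (hbdd i)
  convert h_sum.measure_abs_ge_le ht using 4
  simp only [Finset.sum_const, Finset.card_univ, nsmul_eq_mul, NNReal.coe_mul,
    NNReal.coe_natCast, NNReal.coe_pow, NNReal.coe_div, coe_nnnorm, Real.norm_eq_abs,
    NNReal.coe_ofNat, div_pow, sq_abs]
  rw [show (2 : ℝ) * (_ * ((b - a) ^ 2 / 2 ^ 2)) = _ * (b - a) ^ 2 / 2 by ring,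
    div_div_eq_mul_div]
  ring

theorem measure_abs_sampleMean_sub_integral_ge_le [IsProbabilityMeasure P] {ι E : Type*}
    [Fintype ι] [MeasurableSpace E] {u : ι → Ω → E} (hmeas : ∀ i, Measurable (u i))
    (hindep : iIndepFun u P) {i₀ : ι} (hident : ∀ i, IdentDistrib (u i) (u i₀) P P)
    {f : E → ℝ} (hf : Measurable f) {a b : ℝ} (hbdd : ∀ x, f x ∈ Set.Icc a b)
    {δ : ℝ} (hδ : 0 ≤ δ) :
    P {ω | δ ≤ |(1 / (Fintype.card ι : ℝ)) * ∑ i, f (u i ω) - ∫ ω', f (u i₀ ω') ∂P|} ≤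
      ENNReal.ofReal (2 * exp (-2 * Fintype.card ι * δ ^ 2 / (b - a) ^ 2)) := by
  set n : ℝ := (Fintype.card ι : ℝ)
  set m := ∫ ω', f (u i₀ ω') ∂P
  have hn : 0 < n := Nat.cast_pos.2 (Fintype.card_pos_iff.2 ⟨i₀⟩)
  have h_mean : ∀ i, P[fun ω => f (u i ω)] = m := fun i => ((hident i).comp hf).integral_eq
  have h_hoeffding := measure_abs_sum_sub_integral_ge_le (Y := fun i ω => f (u i ω))
    (hindep.comp (fun _ => f) fun _ => hf) (fun i => (hf.comp (hmeas i)).aemeasurable)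
    (fun i => ae_of_all _ fun ω => hbdd _) (mul_nonneg hn.le hδ)
  simp only [h_mean] at h_hoeffding
  have h_rescale : ∀ ω, (δ ≤ |1 / n * ∑ i, f (u i ω) - m|) ↔
      n * δ ≤ |∑ i, (f (u i ω) - m)| := fun ω => by
    rw [Finset.sum_sub_distrib, Finset.sum_const, Finset.card_univ, nsmul_eq_mul,
      show 1 / n * ∑ i, f (u i ω) - m = (∑ i, f (u i ω) - n * m) / n by field_simp, abs_div,
      abs_of_pos hn, le_div_iff₀ hn, mul_comm]
  simp only [h_rescale]
  convert h_hoeffding using 4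
  rw [show -2 * (n * δ) ^ 2 = n * (-2 * n * δ ^ 2) by ring, mul_div_mul_left _ _ hn.ne']

theorem abs_add_sub_sub_sub_le (a b c d a' b' c' d' : ℝ) :
    |(a + b - c - d) - (a' + b' - c' - d')| ≤ |a - a'| + |b - b'| + |c - c'| + |d - d'| := by
  rw [show (a + b - c - d) - (a' + b' - c' - d') = (a - a') + (b - b') - (c - c') - (d - d') by
    ring]
  exact (abs_sub _ _).trans (add_le_add_left ((abs_sub _ _).trans
    (add_le_add_left (abs_add_le _ _) _)) _)

theorem measure_le_sum_le_sum_measure_div_card_le {ι : Type*} [Fintype ι] [Nonempty ι]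
    (X : ι → Ω → ℝ) (ε : ℝ) :
    P {ω | ε ≤ ∑ i, X i ω} ≤ ∑ i, P {ω | ε / Fintype.card ι ≤ X i ω} := by
  refine (measure_mono fun ω (hω : ε ≤ ∑ i, X i ω) => ?_).trans (measure_iUnion_fintype_le _ _)
  have h_avg : ∑ _i : ι, ε / Fintype.card ι = ε := by
    rw [Finset.sum_const, Finset.card_univ, nsmul_eq_mul]
    field_simp
  obtain ⟨i, -, hi⟩ := Finset.exists_le_of_sum_le Finset.univ_nonempty (h_avg.trans_le hω)
  exact Set.mem_iUnion.2 ⟨i, hi⟩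

end

theorem rff_pairwise_concentration_general
    {Ω : Type*} [MeasurableSpace Ω] (P : Measure Ω) [IsProbabilityMeasure P]
    (d D : ℕ) (hD : 1 ≤ D)
    (u : Fin D → Ω → EuclideanSpace ℝ (Fin d))
    (hmeas : ∀ i, Measurable (u i))
    (hindep : iIndepFun u P)
    (hident : ∀ i j, IdentDistrib (u i) (u j) P P)
    (x₁ x₂ x₁' x₂' : EuclideanSpace ℝ (Fin d)) (ε : ℝ) (hε : 0 < ε)
    (Ghat : EuclideanSpace ℝ (Fin d) → Ω → ℝ)
    (hGhat : ∀ v ω, Ghat v ω = (1 / (D : ℝ)) * ∑ i, Real.cos ⟪u i ω, v⟫)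
    (G : EuclideanSpace ℝ (Fin d) → ℝ)
    (hG : ∀ v, G v = ∫ ω', Real.cos ⟪u ⟨0, hD⟩ ω', v⟫ ∂P) :
    P {ω | ε ≤ |(Ghat (x₁ - x₁') ω + Ghat (x₂ - x₂') ω
          - Ghat (x₁ - x₂') ω - Ghat (x₂ - x₁') ω)
        - (G (x₁ - x₁') + G (x₂ - x₂') - G (x₁ - x₂') - G (x₂ - x₁'))|} ≤
      ENNReal.ofReal (8 * Real.exp (-(D : ℝ) * ε ^ 2 / 32)) := by
  have h_term : ∀ v, P {ω | ε / 4 ≤ |Ghat v ω - G v|} ≤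
      ENNReal.ofReal (2 * exp (-(D : ℝ) * ε ^ 2 / 32)) := fun v => by
    have h := measure_abs_sampleMean_sub_integral_ge_le hmeas hindep (fun i => hident i ⟨0, hD⟩)
      (f := fun x => cos ⟪x, v⟫) (by fun_prop) (fun x => abs_le.1 (abs_cos_le_one _))
      (by positivity : 0 ≤ ε / 4)
    simp only [Fintype.card_fin] at h
    simp only [hGhat, hG]
    convert h using 4
    ring
  set w : Fin 4 → EuclideanSpace ℝ (Fin d) := ![x₁ - x₁', x₂ - x₂', x₁ - x₂', x₂ - x₁']
  calc _ ≤ P {ω | ε ≤ ∑ k, |Ghat (w k) ω - G (w k)|} :=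
        measure_mono fun ω (hω : ε ≤ _) => hω.trans <| by
          simpa [Fin.sum_univ_four, w] using abs_add_sub_sub_sub_le _ _ _ _ _ _ _ _
    _ ≤ ∑ k, P {ω | ε / 4 ≤ |Ghat (w k) ω - G (w k)|} := by
        simpa using measure_le_sum_le_sum_measure_div_card_le (P := P)
          (fun k ω => |Ghat (w k) ω - G (w k)|) ε
    _ ≤ ∑ _k : Fin 4, ENNReal.ofReal (2 * exp (-(D : ℝ) * ε ^ 2 / 32)) :=
        Finset.sum_le_sum fun k _ => h_term (w k)
    _ = ENNReal.ofReal (8 * Real.exp (-(D : ℝ) * ε ^ 2 / 32)) := by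
        rw [Finset.sum_const, Finset.card_univ, Fintype.card_fin, ← ENNReal.ofReal_nsmul]
        norm_num [← mul_assoc]

/-- **Corollary 1 of the paper: pairwise random Fourier concentration.**
With iid random frequencies `u 1, …, u D` in `ℝ^d`, `Ĝ(v) = (1/D) ∑ᵢ cos⟨uᵢ, v⟩` and
`G(v) = E[cos⟨u₁, v⟩]`, the random Fourier estimate of the pairwise kernel
`k = G(x₁−x₁') + G(x₂−x₂') − G(x₁−x₂') − G(x₂−x₁')` deviates from `k` by at least `ε`
with probability at most `8·exp(−Dε²/32)`. -/
theorem rff_pairwise_concentration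
    {Ω : Type*} [MeasurableSpace Ω] (P : Measure Ω) [IsProbabilityMeasure P]
    (d D : ℕ) (hd : 1 ≤ d) (hD : 1 ≤ D)
    (u : Fin D → Ω → EuclideanSpace ℝ (Fin d))
    (hmeas : ∀ i, Measurable (u i))
    (hindep : iIndepFun u P)
    (hident : ∀ i j, IdentDistrib (u i) (u j) P P)
    (x₁ x₂ x₁' x₂' : EuclideanSpace ℝ (Fin d)) (ε : ℝ) (hε : 0 < ε)
    (Ghat : EuclideanSpace ℝ (Fin d) → Ω → ℝ)
    (hGhat : ∀ v ω, Ghat v ω = (1 / (D : ℝ)) * ∑ i, Real.cos ⟪u i ω, v⟫)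
    (G : EuclideanSpace ℝ (Fin d) → ℝ)
    (hG : ∀ v, G v = ∫ ω', Real.cos ⟪u ⟨0, hD⟩ ω', v⟫ ∂P) :
    P {ω | ε ≤ |(Ghat (x₁ - x₁') ω + Ghat (x₂ - x₂') ω
          - Ghat (x₁ - x₂') ω - Ghat (x₂ - x₁') ω)
        - (G (x₁ - x₁') + G (x₂ - x₂') - G (x₁ - x₂') - G (x₂ - x₁'))|} ≤
      ENNReal.ofReal (8 * Real.exp (-(D : ℝ) * ε ^ 2 / 32)) :=
  rff_pairwise_concentration_general P d D hD u hmeas hindep hident x₁ x₂ x₁' x₂' ε hε Ghat hGhat G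
    hG
end

section
/- Let X be a set and G : X × X → ℝ a symmetric positive semi-definite kernel, i.e., G(x, y) = G(y, x) and for every n, every c : Fin n → ℝ, and every p : Fin n → X, Σ_{i,j} c_i·c_j·G(p_i, p_j) ≥ 0. Define the pairwise kernel k : (X × X) × (X × X) → ℝ by k((x_1, x_2), (x_1', x_2')) = G(x_1, x_1') + G(x_2, x_2') − G(x_1, x_2') − G(x_2, x_1'). Then k is symmetric and positive semi-definite on X × X: for every n, every c : Fin n → ℝ, and every q : Fin n → X × X, Σ_{i,j} c_i·c_j·k(q_i, q_j) ≥ 0. -/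
open Finset

/-- The pairwise kernel built from a base kernel `G`:
`k((x₁,x₂),(x₁',x₂')) = G(x₁,x₁') + G(x₂,x₂') − G(x₁,x₂') − G(x₂,x₁')`. -/
def pairwiseKernel {X : Type*} (G : X → X → ℝ) : (X × X) → (X × X) → ℝ :=
  fun p q => G p.1 q.1 + G p.2 q.2 - G p.1 q.2 - G p.2 q.1

/-- **The pairwise kernel of a Mercer kernel is a Mercer kernel** (Section 4.3 of the
paper): if `G` is symmetric and positive semi-definite on `X`, then the pairwise kernel
`k` is symmetric and positive semi-definite on `X × X`. -/
theorem pairwiseKernel_symm_posSemidef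
    {X : Type*} (G : X → X → ℝ)
    (hsymm : ∀ x y : X, G x y = G y x)
    (hpsd : ∀ (n : ℕ) (c : Fin n → ℝ) (p : Fin n → X),
      0 ≤ ∑ i, ∑ j, c i * c j * G (p i) (p j)) :
    (∀ p q : X × X, pairwiseKernel G p q = pairwiseKernel G q p) ∧
      ∀ (n : ℕ) (c : Fin n → ℝ) (q : Fin n → X × X),
        0 ≤ ∑ i, ∑ j, c i * c j * pairwiseKernel G (q i) (q j) := by
  constructor
  · intro p q
    simp only [pairwiseKernel]
    rw [hsymm p.1 q.1, hsymm p.2 q.2, hsymm p.1 q.2, hsymm p.2 q.1]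
    ring
  · intro n c q
    have h := hpsd (n + n) (Fin.append c (fun i => -c i))
      (Fin.append (fun i => (q i).1) (fun i => (q i).2))
    have key : (∑ i, ∑ j, Fin.append c (fun i => -c i) i *
        Fin.append c (fun i => -c i) j *
        G (Fin.append (fun i => (q i).1) (fun i => (q i).2) i)
          (Fin.append (fun i => (q i).1) (fun i => (q i).2) j)) =
        ∑ i, ∑ j, c i * c j * pairwiseKernel G (q i) (q j) := by
      rw [Fin.sum_univ_add]
      simp only [Fin.sum_univ_add, Fin.append_left, Fin.append_right, pairwiseKernel]
      rw [← Finset.sum_add_distrib]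
      apply Finset.sum_congr rfl
      intro i _
      rw [← Finset.sum_add_distrib, ← Finset.sum_add_distrib, ← Finset.sum_add_distrib]
      apply Finset.sum_congr rfl
      intro j _
      ring
    rw [key] at h
    exact h
end

section
/- Let X be a set, m ≥ 1, H = ℝ^{2m} with its standard inner product, and ψ : X × X → H a feature map with ‖ψ(p)‖ ≤ B for all p. Let k : (X × X) × (X × X) → ℝ satisfy |⟨ψ(p), ψ(q)⟩ − k(p, q)| ≤ ε for all p, q. Let x_2, …, x_T ∈ X be the received examples together with, for each t ∈ {2, …, T}, the history x_1, …, x_{t−1}; for each t and i < t let φ_{t,i} : ℝ → ℝ be convex, differentiable, and G'-Lipschitz, and define the local all-pairs loss of a function w : X × X → ℝ by L_t(w) = (1/(t−1))·Σ_{i=1}^{t−1} φ_{t,i}(w(x_t, x_i)), and of a vector v ∈ H by L̂_t(v) = L_t(p ↦ ⟨v, ψ(p)⟩). Let w* : X × X → ℝ be w*(p) = Σ_{i≠j} a_{i,j}·k((x_i, x_j), p) with ‖a‖₁ = Σ_{i≠j}|a_{i,j}|, and let v̄* ∈ H be v̄* = Σ_{i≠j} a_{i,j}·ψ(x_i, x_j),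 with induced function w̄*(p) = ⟨v̄*, ψ(p)⟩. Suppose the iterates v_1 = 0, v_2, …, v_T ∈ H produced by any online algorithm satisfy the regret bound Σ_{t=2}^T L̂_t(v_{t−1}) − Σ_{t=2}^T L̂_t(v̄*) ≤ C. Then, writing w_{t−1}(p) = ⟨v_{t−1}, ψ(p)⟩: Σ_{t=2}^T L_t(w_{t−1}) − Σ_{t=2}^T L_t(w*) ≤ C + G'·(T−1)·‖a‖₁·ε. -/
open scoped RealInnerProductSpace
open Finset

/-- **Regret decomposition behind the main Theorem 1.** The iterates live in the
random-Fourier-feature space `H = ℝ^{2m}` with induced functions `p ↦ ⟨v, ψ(p)⟩`, whose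
kernel `⟨ψ(p), ψ(q)⟩` uniformly `ε`-approximates the true pairwise kernel `k`. If the
online iterates satisfy the regret bound `C` against `v̄* = ∑ aᵢⱼ ψ(xᵢ, xⱼ)` for the
local all-pairs losses, then their regret against the true-kernel expansion
`w* = ∑ aᵢⱼ k((xᵢ,xⱼ), ·)` is at most `C + G'·(T−1)·‖a‖₁·ε`. -/
theorem regret_decomposition_main
    {X : Type*} (m : ℕ) (hm : 1 ≤ m) (T : ℕ) (hT : 2 ≤ T)
    (ψ : X × X → EuclideanSpace ℝ (Fin (2 * m)))
    (B : ℝ) (hB : ∀ p : X × X, ‖ψ p‖ ≤ B)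
    (k : (X × X) → (X × X) → ℝ) (ε : ℝ)
    (hk : ∀ p q : X × X, |⟪ψ p, ψ q⟫ - k p q| ≤ ε)
    (x : ℕ → X)
    (G' : ℝ) (hG' : 0 ≤ G')
    (φ : ℕ → ℕ → ℝ → ℝ)
    (hφ_cvx : ∀ t ∈ Finset.Icc 2 T, ∀ i ∈ Finset.Icc 1 (t - 1),
      ConvexOn ℝ Set.univ (φ t i))
    (hφ_diff : ∀ t ∈ Finset.Icc 2 T, ∀ i ∈ Finset.Icc 1 (t - 1),
      Differentiable ℝ (φ t i))
    (hφ_lip : ∀ t ∈ Finset.Icc 2 T, ∀ i ∈ Finset.Icc 1 (t - 1), ∀ s s' : ℝ,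
      |φ t i s - φ t i s'| ≤ G' * |s - s'|)
    (a : ℕ → ℕ → ℝ)
    (wstar : X × X → ℝ)
    (hwstar : ∀ p : X × X, wstar p =
      ∑ ij ∈ ((Finset.Icc 1 T ×ˢ Finset.Icc 1 T).filter fun ij => ij.1 ≠ ij.2),
        a ij.1 ij.2 * k (x ij.1, x ij.2) p)
    (vbar : EuclideanSpace ℝ (Fin (2 * m)))
    (hvbar : vbar =
      ∑ ij ∈ ((Finset.Icc 1 T ×ˢ Finset.Icc 1 T).filter fun ij => ij.1 ≠ ij.2),
        a ij.1 ij.2 • ψ (x ij.1, x ij.2))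
    (v : ℕ → EuclideanSpace ℝ (Fin (2 * m))) (hv1 : v 1 = 0)
    (C : ℝ)
    (hregret :
      ∑ t ∈ Finset.Icc 2 T, (1 / ((t : ℝ) - 1)) *
          ∑ i ∈ Finset.Icc 1 (t - 1), φ t i ⟪v (t - 1), ψ (x t, x i)⟫
        - ∑ t ∈ Finset.Icc 2 T, (1 / ((t : ℝ) - 1)) *
            ∑ i ∈ Finset.Icc 1 (t - 1), φ t i ⟪vbar, ψ (x t, x i)⟫ ≤ C) :
    ∑ t ∈ Finset.Icc 2 T, (1 / ((t : ℝ) - 1)) *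
        ∑ i ∈ Finset.Icc 1 (t - 1), φ t i ⟪v (t - 1), ψ (x t, x i)⟫
      - ∑ t ∈ Finset.Icc 2 T, (1 / ((t : ℝ) - 1)) *
          ∑ i ∈ Finset.Icc 1 (t - 1), φ t i (wstar (x t, x i)) ≤
      C + G' * ((T : ℝ) - 1) *
        (∑ ij ∈ ((Finset.Icc 1 T ×ˢ Finset.Icc 1 T).filter fun ij => ij.1 ≠ ij.2),
          |a ij.1 ij.2|) * ε := by
  set S := ((Finset.Icc 1 T ×ˢ Finset.Icc 1 T).filter fun ij => ij.1 ≠ ij.2) with hS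
  set A : ℝ := ∑ ij ∈ S, |a ij.1 ij.2| with hA
  have hAnn : 0 ≤ A := Finset.sum_nonneg fun _ _ => abs_nonneg _
  have hε : 0 ≤ ε := le_trans (abs_nonneg _) (hk (x 1, x 1) (x 1, x 1))
  -- pointwise bound
  have key : ∀ p : X × X, |⟪vbar, ψ p⟫ - wstar p| ≤ A * ε := by
    intro p
    have h1 : ⟪vbar, ψ p⟫ = ∑ ij ∈ S, a ij.1 ij.2 * ⟪ψ (x ij.1, x ij.2), ψ p⟫ := by
      rw [hvbar, sum_inner]
      exact Finset.sum_congr rfl fun ij _ => real_inner_smul_left _ _ _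
    rw [h1, hwstar, ← Finset.sum_sub_distrib]
    calc |∑ ij ∈ S, (a ij.1 ij.2 * ⟪ψ (x ij.1, x ij.2), ψ p⟫
            - a ij.1 ij.2 * k (x ij.1, x ij.2) p)|
        ≤ ∑ ij ∈ S, |a ij.1 ij.2 * ⟪ψ (x ij.1, x ij.2), ψ p⟫
            - a ij.1 ij.2 * k (x ij.1, x ij.2) p| := Finset.abs_sum_le_sum_abs _ _
      _ ≤ ∑ ij ∈ S, |a ij.1 ij.2| * ε := by
          refine Finset.sum_le_sum fun ij _ => ?_
          rw [← mul_sub, abs_mul]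
          exact mul_le_mul_of_nonneg_left (hk _ _) (abs_nonneg _)
      _ = A * ε := by rw [hA, Finset.sum_mul]
  -- difference of the comparator sums
  have hdiff : ∑ t ∈ Finset.Icc 2 T, (1 / ((t : ℝ) - 1)) *
        ∑ i ∈ Finset.Icc 1 (t - 1), φ t i ⟪vbar, ψ (x t, x i)⟫
      - ∑ t ∈ Finset.Icc 2 T, (1 / ((t : ℝ) - 1)) *
          ∑ i ∈ Finset.Icc 1 (t - 1), φ t i (wstar (x t, x i))
      ≤ G' * ((T : ℝ) - 1) * A * ε := by
    rw [← Finset.sum_sub_distrib]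
    have hbound : ∀ t ∈ Finset.Icc 2 T,
        (1 / ((t : ℝ) - 1)) * ∑ i ∈ Finset.Icc 1 (t - 1), φ t i ⟪vbar, ψ (x t, x i)⟫
        - (1 / ((t : ℝ) - 1)) * ∑ i ∈ Finset.Icc 1 (t - 1), φ t i (wstar (x t, x i))
        ≤ G' * A * ε := by
      intro t ht
      have ht2 : 2 ≤ t := (Finset.mem_Icc.mp ht).1
      have htpos : (0:ℝ) < (t : ℝ) - 1 := by
        have : (2:ℝ) ≤ (t:ℝ) := by exact_mod_cast ht2
        linarith
      rw [← mul_sub, ← Finset.sum_sub_distrib]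
      have hcard : (Finset.Icc 1 (t-1)).card = t - 1 := by
        rw [Nat.card_Icc]; omega
      have hsum : ∑ i ∈ Finset.Icc 1 (t - 1),
          (φ t i ⟪vbar, ψ (x t, x i)⟫ - φ t i (wstar (x t, x i)))
          ≤ ((t:ℝ) - 1) * (G' * A * ε) := by
        have := Finset.sum_le_sum (f := fun i =>
            φ t i ⟪vbar, ψ (x t, x i)⟫ - φ t i (wstar (x t, x i)))
            (g := fun _ => G' * A * ε) (s := Finset.Icc 1 (t-1)) ?_
        · calc ∑ i ∈ Finset.Icc 1 (t - 1),
              (φ t i ⟪vbar, ψ (x t, x i)⟫ - φ t i (wstar (x t, x i)))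
              ≤ ∑ _i ∈ Finset.Icc 1 (t - 1), G' * A * ε := this
            _ = ((t:ℝ) - 1) * (G' * A * ε) := by
                rw [Finset.sum_const, hcard, nsmul_eq_mul]
                congr 1
                have h1t : 1 ≤ t := le_trans one_le_two ht2
                push_cast [Nat.cast_sub h1t]
                ring
        · intro i hi
          calc φ t i ⟪vbar, ψ (x t, x i)⟫ - φ t i (wstar (x t, x i))
              ≤ |φ t i ⟪vbar, ψ (x t, x i)⟫ - φ t i (wstar (x t, x i))| := le_abs_self _
            _ ≤ G' * |⟪vbar, ψ (x t, x i)⟫ - wstar (x t, x i)| := hφ_lip t ht i hi _ _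
            _ ≤ G' * (A * ε) := mul_le_mul_of_nonneg_left (key _) hG'
            _ = G' * A * ε := by ring
      calc (1 / ((t:ℝ) - 1)) * ∑ i ∈ Finset.Icc 1 (t - 1),
            (φ t i ⟪vbar, ψ (x t, x i)⟫ - φ t i (wstar (x t, x i)))
          ≤ (1 / ((t:ℝ) - 1)) * (((t:ℝ) - 1) * (G' * A * ε)) :=
            mul_le_mul_of_nonneg_left hsum (by positivity)
        _ = G' * A * ε := by field_simp
    calc ∑ t ∈ Finset.Icc 2 T,
          ((1 / ((t : ℝ) - 1)) * ∑ i ∈ Finset.Icc 1 (t - 1), φ t i ⟪vbar, ψ (x t, x i)⟫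
          - (1 / ((t : ℝ) - 1)) * ∑ i ∈ Finset.Icc 1 (t - 1), φ t i (wstar (x t, x i)))
        ≤ ∑ _t ∈ Finset.Icc 2 T, G' * A * ε := Finset.sum_le_sum hbound
      _ = ((T : ℝ) - 1) * (G' * A * ε) := by
          rw [Finset.sum_const, Nat.card_Icc, nsmul_eq_mul]
          congr 1
          have : 1 ≤ T := le_trans one_le_two hT
          have h2 : 2 ≤ T + 1 := by omega
          rw [Nat.cast_sub h2]
          push_cast; ring
      _ = G' * ((T : ℝ) - 1) * A * ε := by ring
  linarith
end
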